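/- Let b : ℝ^d → ℝ^d satisfy |b(x)| ≤ K(1+|x|)^{ρ/2+2} for all x, with K, ρ > 0. Define the tamed coefficient b_n(x) := b(x) / (1 + n^{-1}|x|^{ρ+2}) for n ∈ ℕ, n ≥ 1. Then there exists a constant K' > 0, independent of n, such that |b_n(x)| ≤ K' · min( n^{1/2}(1+|x|), (1+|x|)^{ρ/2+2} ) for all x ∈ ℝ^d and all n ≥ 1. -/
import Mathlib


open Real

private lemma tamed_key (t N ρ : ℝ) (ht : 0 ≤ t) (hN : 1 ≤ N) (hρ : 0 < ρ) :
    (1 + t) ^ (ρ / 2 + 1) ≤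
      2 ^ (ρ / 2 + 1) * (N ^ ((1 : ℝ) / 2) * (1 + N⁻¹ * t ^ (ρ + 2))) := by
  have hN0 : (0 : ℝ) < N := lt_of_lt_of_le one_pos hN
  have he : (0 : ℝ) ≤ ρ / 2 + 1 := by linarith
  have hNs : (1 : ℝ) ≤ N ^ ((1 : ℝ) / 2) :=
    Real.one_le_rpow hN (by norm_num)
  have hD0 : (0 : ℝ) ≤ N⁻¹ * t ^ (ρ + 2) := by positivity
  have hsq : t ^ (ρ + 2) = (t ^ (ρ / 2 + 1)) ^ (2 : ℕ) := by
    rw [← Real.rpow_natCast (t ^ (ρ / 2 + 1)) 2, ← Real.rpow_mul ht]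
    norm_num
    ring_nf
  rcases le_or_gt (t ^ (ρ + 2)) N with h | h
  · have h1 : t ^ (ρ / 2 + 1) ≤ N ^ ((1 : ℝ) / 2) := by
      have : t ^ (ρ / 2 + 1) = (t ^ (ρ + 2)) ^ ((1 : ℝ) / 2) := by
        rw [← Real.rpow_mul ht]; ring_nf
      rw [this]
      exact Real.rpow_le_rpow (Real.rpow_nonneg ht _) h (by norm_num)
    rcases le_total t 1 with h2 | h2
    · have h3 : (1 + t) ^ (ρ / 2 + 1) ≤ 2 ^ (ρ / 2 + 1) :=
        Real.rpow_le_rpow (by linarith) (by linarith) he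
      have h4 : (1 : ℝ) ≤ N ^ ((1 : ℝ) / 2) * (1 + N⁻¹ * t ^ (ρ + 2)) := by
        nlinarith
      nlinarith [Real.rpow_nonneg (by norm_num : (0:ℝ) ≤ 2) (ρ / 2 + 1)]
    · have h3 : (1 + t) ^ (ρ / 2 + 1) ≤ (2 * t) ^ (ρ / 2 + 1) :=
        Real.rpow_le_rpow (by linarith) (by linarith) he
      rw [Real.mul_rpow (by norm_num) ht] at h3
      have h5 : t ^ (ρ / 2 + 1) ≤ N ^ ((1 : ℝ) / 2) * (1 + N⁻¹ * t ^ (ρ + 2)) := by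
        nlinarith
      nlinarith [Real.rpow_nonneg (by norm_num : (0:ℝ) ≤ 2) (ρ / 2 + 1),
        Real.rpow_nonneg ht (ρ / 2 + 1)]
  · have ht1 : 1 ≤ t := by
      by_contra hc
      push_neg at hc
      have : t ^ (ρ + 2) ≤ 1 ^ (ρ + 2) :=
        Real.rpow_le_rpow ht hc.le (by linarith)
      simp at this
      linarith
    have hsqrt : N ^ ((1 : ℝ) / 2) ≤ t ^ (ρ / 2 + 1) := by
      have : N ^ ((1 : ℝ) / 2) ≤ (t ^ (ρ + 2)) ^ ((1 : ℝ) / 2) :=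
        Real.rpow_le_rpow hN0.le h.le (by norm_num)
      rwa [← Real.rpow_mul ht, show (ρ + 2) * (1 / 2) = ρ / 2 + 1 by ring] at this
    have h3 : (1 + t) ^ (ρ / 2 + 1) ≤ (2 * t) ^ (ρ / 2 + 1) :=
      Real.rpow_le_rpow (by linarith) (by linarith) he
    rw [Real.mul_rpow (by norm_num) ht] at h3
    -- N^(1/2) * t^e ≤ (t^e)^2 = t^(ρ+2), hence t^e ≤ N^(1/2) * N⁻¹ * t^(ρ+2)
    have hte : 0 ≤ t ^ (ρ / 2 + 1) := Real.rpow_nonneg ht _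
    have h6 : N ^ ((1 : ℝ) / 2) * t ^ (ρ / 2 + 1) ≤ t ^ (ρ + 2) := by
      rw [hsq]; nlinarith
    have h5 : t ^ (ρ / 2 + 1) ≤ N ^ ((1 : ℝ) / 2) * (1 + N⁻¹ * t ^ (ρ + 2)) := by
      have hN2 : (0:ℝ) < N ^ ((1:ℝ)/2) := by positivity
      rw [mul_add, mul_one]
      have hhalf : N ^ ((1:ℝ)/2) * N ^ ((1:ℝ)/2) = N := by
        rw [← Real.rpow_add hN0]; norm_num
      have hNi : N⁻¹ * N = 1 := inv_mul_cancel₀ hN0.ne'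
      nlinarith [mul_le_mul_of_nonneg_left h6 (le_of_lt (inv_pos.mpr hN0))]
      
    nlinarith [Real.rpow_nonneg (by norm_num : (0:ℝ) ≤ 2) (ρ / 2 + 1)]

/-- growth bound for the tamed drift coefficient
`b_n(x) = b(x) / (1 + n⁻¹ |x|^(ρ+2))`. -/
theorem tamed_drift_growth {d : ℕ}
    (b : EuclideanSpace ℝ (Fin d) → EuclideanSpace ℝ (Fin d))
    (K ρ : ℝ) (hK : 0 < K) (hρ : 0 < ρ)
    (hb : ∀ x, ‖b x‖ ≤ K * (1 + ‖x‖) ^ (ρ / 2 + 2)) :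
    ∃ K' > (0 : ℝ), ∀ n : ℕ, 1 ≤ n → ∀ x : EuclideanSpace ℝ (Fin d),
      ‖(1 + (n : ℝ)⁻¹ * ‖x‖ ^ (ρ + 2))⁻¹ • b x‖ ≤
        K' * min ((n : ℝ) ^ ((1 : ℝ) / 2) * (1 + ‖x‖)) ((1 + ‖x‖) ^ (ρ / 2 + 2)) := by
  refine ⟨K * 2 ^ (ρ / 2 + 1), by positivity, fun n hn x => ?_⟩
  set t := ‖x‖ with ht_def
  have ht : 0 ≤ t := norm_nonneg x
  have hN : (1 : ℝ) ≤ n := by exact_mod_cast hn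
  have hN0 : (0 : ℝ) < n := lt_of_lt_of_le one_pos hN
  have hD0 : (0 : ℝ) < 1 + (n : ℝ)⁻¹ * t ^ (ρ + 2) := by positivity
  set D := 1 + (n : ℝ)⁻¹ * t ^ (ρ + 2) with hD_def
  have hD1 : (1 : ℝ) ≤ D := by
    have : (0:ℝ) ≤ (n : ℝ)⁻¹ * t ^ (ρ + 2) := by positivity
    simp [hD_def]; linarith
  have hnorm : ‖D⁻¹ • b x‖ = D⁻¹ * ‖b x‖ := by
    rw [norm_smul, Real.norm_eq_abs, abs_of_pos (by positivity)]
  rw [hnorm]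
  have h2pos : (0:ℝ) < 2 ^ (ρ / 2 + 1) := by positivity
  have h2one : (1:ℝ) ≤ 2 ^ (ρ / 2 + 1) :=
    Real.one_le_rpow (by norm_num) (by linarith)
  have hbx : ‖b x‖ ≤ K * (1 + t) ^ (ρ / 2 + 2) := hb x
  have hbx0 : 0 ≤ ‖b x‖ := norm_nonneg _
  rw [mul_min_of_nonneg _ _ (by positivity : (0:ℝ) ≤ K * 2 ^ (ρ / 2 + 1)), le_min_iff]
  constructor
  · -- D⁻¹ ‖b x‖ ≤ K * 2^e * √n * (1+t)
    have hkey := tamed_key t n ρ ht hN hρ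
    have hsplit : (1 + t) ^ (ρ / 2 + 2) = (1 + t) ^ (ρ / 2 + 1) * (1 + t) := by
      rw [show ρ / 2 + 2 = ρ / 2 + 1 + 1 by ring, Real.rpow_add (by linarith : (0:ℝ) < 1 + t),
        Real.rpow_one]
    rw [inv_mul_le_iff₀ hD0]
    calc ‖b x‖ ≤ K * (1 + t) ^ (ρ / 2 + 2) := hbx
      _ = K * ((1 + t) ^ (ρ / 2 + 1) * (1 + t)) := by rw [hsplit]
      _ ≤ K * (2 ^ (ρ / 2 + 1) * ((n:ℝ) ^ ((1:ℝ)/2) * D) * (1 + t)) := by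
          apply mul_le_mul_of_nonneg_left _ hK.le
          apply mul_le_mul_of_nonneg_right _ (by linarith)
          simpa [mul_assoc] using hkey
      _ = D * (K * 2 ^ (ρ / 2 + 1) * ((n:ℝ) ^ ((1:ℝ)/2) * (1 + t))) := by ring
  · -- D⁻¹ ‖b x‖ ≤ K * 2^e * (1+t)^(ρ/2+2)
    have h1 : D⁻¹ * ‖b x‖ ≤ ‖b x‖ := by
      have : D⁻¹ ≤ 1 := inv_le_one_of_one_le₀ hD1
      nlinarith
    have h2 : K * (1 + t) ^ (ρ / 2 + 2) ≤ K * 2 ^ (ρ / 2 + 1) * (1 + t) ^ (ρ / 2 + 2) := by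
      have := Real.rpow_nonneg (show (0:ℝ) ≤ 1 + t by linarith) (ρ / 2 + 2)
      nlinarith
    linarith
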